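/- (Associated dominant solution.) Let λ ∈ ℝ and let Z̃ = (X̃; Ũ) be a conjoined basis of (S_λ) such that X̃ₖ is invertible for every k ∈ ℕ. Put Λₖ := Σ_{j=0}^{k−1} ( −X̃_j^{−1} ℬ_j (X̃_{j+1}*)^{−1} ) (so Λ₀ = 0), X̂ₖ := X̃ₖ Λₖ and Ûₖ := Ũₖ Λₖ + (X̃ₖ*)^{−1}. Then: (i) each matrix X̃ₖ^{−1} ℬₖ (X̃_{k+1}*)^{−1} is Hermitian, hence Λₖ is Hermitian for every k; (ii) Ẑ = (X̂; Û) is a solution of (S_λ), i.e., Ẑₖ = (𝒮ₖ + λ𝒱ₖ) Ẑ_{k+1} for all k; (iii) Z̃ₖ* 𝒥 Ẑₖ = Iₙ for all k (so Z̃ and Ẑ are normalized conjoined bases); and (iv) whenever Λₖ is invertible, X̂ₖ is invertible and X̂ₖ^{−1} X̃ₖ = Λₖ^{−1} is Hermitian. -/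

import Mathlib

/-!
For real `λ` and Hermitian `𝒲ₖ` the step matrix `𝒮ₖ + λ𝒱ₖ = [[I, 0], [λ𝒲ₖ, I]] 𝒮ₖ` is a product
of symplectic matrices. Writing `𝒜, ℬ, 𝒞', 𝒟'` for its blocks, inverting it via `−𝒥 (·)* 𝒥` gives
the backward step `X̃_{k+1} = 𝒟'* X̃ₖ − ℬ* Ũₖ`. Hence `X̃_{k+1} X̃ₖ⁻¹ ℬ = 𝒟'* ℬ − ℬ* (Ũₖ X̃ₖ⁻¹) ℬ`
is Hermitian (`Ũₖ X̃ₖ⁻¹` is, as `Z̃` is a conjoined basis), and so is its congruence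
`X̃ₖ⁻¹ ℬ (X̃_{k+1}*)⁻¹ = Λₖ − Λ_{k+1}`. The backward step also gives
`𝒟' (X̃_{k+1}*)⁻¹ = (X̃ₖ*)⁻¹ + Ũₖ (Λₖ − Λ_{k+1})`, which is exactly the recursion for `Ẑ`, and the
Wronskian is `Z̃ₖ* 𝒥 Ẑₖ = (X̃ₖ* Ũₖ − Ũₖ* X̃ₖ) Λₖ + I = I`.
-/

open Matrix Filter
open scoped ComplexOrder

noncomputable def Jmat (n : ℕ) : Matrix (Fin n ⊕ Fin n) (Fin n ⊕ Fin n) ℂ :=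
  Matrix.fromBlocks 0 1 (-1) 0

noncomputable def PsiMat {n : ℕ} (W : ℕ → Matrix (Fin n) (Fin n) ℂ) (k : ℕ) :
    Matrix (Fin n ⊕ Fin n) (Fin n ⊕ Fin n) ℂ :=
  Matrix.fromBlocks (W k) 0 0 0

noncomputable def Vmat {n : ℕ} (S : ℕ → Matrix (Fin n ⊕ Fin n) (Fin n ⊕ Fin n) ℂ)
    (W : ℕ → Matrix (Fin n) (Fin n) ℂ) (k : ℕ) :
    Matrix (Fin n ⊕ Fin n) (Fin n ⊕ Fin n) ℂ :=
  -(Jmat n * PsiMat W k * S k)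

/-- `Z` is a conjoined basis of system `(S_ν)`: a `2n×n` matrix solution with
`rank Zₖ = n` and `Zₖ* 𝒥 Zₖ = 0` for all `k`. -/
def IsConjoinedBasis {n : ℕ} (S : ℕ → Matrix (Fin n ⊕ Fin n) (Fin n ⊕ Fin n) ℂ)
    (W : ℕ → Matrix (Fin n) (Fin n) ℂ) (nu : ℝ)
    (Z : ℕ → Matrix (Fin n ⊕ Fin n) (Fin n) ℂ) : Prop :=
  (∀ k, Z k = (S k + (nu : ℂ) • Vmat S W k) * Z (k + 1)) ∧
    ∀ k, (Z k).rank = n ∧ (Z k)ᴴ * Jmat n * Z k = 0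

/-- `Z̃ = (X̃; Ũ)` is a recessive solution of `(S_ν)`: a conjoined basis such that for all
sufficiently large `k` the matrix `X̃ₖ` is invertible with `−X̃ₖ⁻¹ ℬₖ (X̃_{k+1}*)⁻¹ ≥ 0`,
and for every conjoined basis `Z = (X; U)` normalized with `Z̃` (i.e. `Zₖ* 𝒥 Z̃ₖ = I`),
the matrix `Xₖ` is invertible for all large `k` and `Xₖ⁻¹ X̃ₖ → 0` as `k → ∞`. -/
def IsRecessive {n : ℕ} (S : ℕ → Matrix (Fin n ⊕ Fin n) (Fin n ⊕ Fin n) ℂ)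
    (W B : ℕ → Matrix (Fin n) (Fin n) ℂ) (nu : ℝ)
    (Xt Ut : ℕ → Matrix (Fin n) (Fin n) ℂ) : Prop :=
  IsConjoinedBasis S W nu (fun k => Matrix.fromRows (Xt k) (Ut k)) ∧
    (∃ k₀ : ℕ, ∀ k, k₀ ≤ k →
      IsUnit (Xt k) ∧ (-((Xt k)⁻¹ * B k * ((Xt (k + 1))ᴴ)⁻¹)).PosSemidef) ∧
    ∀ X U : ℕ → Matrix (Fin n) (Fin n) ℂ,
      IsConjoinedBasis S W nu (fun k => Matrix.fromRows (X k) (U k)) →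
      (∀ k, (Matrix.fromRows (X k) (U k))ᴴ * Jmat n * Matrix.fromRows (Xt k) (Ut k) = 1) →
      (∃ k₁ : ℕ, ∀ k, k₁ ≤ k → IsUnit (X k)) ∧
        Filter.Tendsto (fun k => (X k)⁻¹ * Xt k) Filter.atTop (nhds 0)

/-- The system is eventually controllable: there is `N` such that on any finite subinterval
`{K,…,M}` of `[N,∞)` the only `u` with `0 = ℬₖ u_{k+1}` and `uₖ = 𝒟ₖ u_{k+1}` for all
`k ∈ {K,…,M−1}` is the trivial one. -/
def EventuallyControllable {n : ℕ} (B D : ℕ → Matrix (Fin n) (Fin n) ℂ) : Prop :=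
  ∃ N : ℕ, ∀ K M : ℕ, N ≤ K → K < M →
    ∀ u : ℕ → Fin n → ℂ,
      (∀ k, K ≤ k → k < M → B k *ᵥ u (k + 1) = 0 ∧ u k = D k *ᵥ u (k + 1)) →
      ∀ k, K ≤ k → k ≤ M → u k = 0

/-- The strong Atkinson (definiteness) condition: there are `λ₀ ∈ ℂ` and `a ≤ b` in `ℕ`
such that every solution `z` of `(S_{λ₀})` with `Σ_{k=a}^{b} zₖ*Ψₖzₖ = 0` vanishes
identically. -/
def StrongAtkinson {n : ℕ} (S : ℕ → Matrix (Fin n ⊕ Fin n) (Fin n ⊕ Fin n) ℂ)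
    (W : ℕ → Matrix (Fin n) (Fin n) ℂ) : Prop :=
  ∃ (lam0 : ℂ) (a b : ℕ), a ≤ b ∧
    ∀ z : ℕ → (Fin n ⊕ Fin n) → ℂ,
      (∀ k, z k = (S k + lam0 • Vmat S W k) *ᵥ z (k + 1)) →
      (∑ k ∈ Finset.Icc a b, star (z k) ⬝ᵥ (PsiMat W k *ᵥ z k)) = 0 →
      ∀ k, z k = 0

/-- `Λₖ = Σ_{j=0}^{k−1} (−X̃_j⁻¹ ℬ_j (X̃_{j+1}*)⁻¹)` (so `Λ₀ = 0`). -/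
noncomputable def LamMat {n : ℕ} (B Xt : ℕ → Matrix (Fin n) (Fin n) ℂ) (k : ℕ) :
    Matrix (Fin n) (Fin n) ℂ :=
  ∑ j ∈ Finset.range k, -((Xt j)⁻¹ * B j * ((Xt (j + 1))ᴴ)⁻¹)

/-- `X̂ₖ = X̃ₖ Λₖ`. -/
noncomputable def Xhat {n : ℕ} (B Xt : ℕ → Matrix (Fin n) (Fin n) ℂ) (k : ℕ) :
    Matrix (Fin n) (Fin n) ℂ :=
  Xt k * LamMat B Xt k

/-- `Ûₖ = Ũₖ Λₖ + (X̃ₖ*)⁻¹`. -/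
noncomputable def Uhat {n : ℕ} (B Xt Ut : ℕ → Matrix (Fin n) (Fin n) ℂ) (k : ℕ) :
    Matrix (Fin n) (Fin n) ℂ :=
  Ut k * LamMat B Xt k + ((Xt k)ᴴ)⁻¹

def IsSymplectic {n : ℕ} (M : Matrix (Fin n ⊕ Fin n) (Fin n ⊕ Fin n) ℂ) : Prop :=
  Mᴴ * Jmat n * M = Jmat n

section Symplectic

variable {n : ℕ}

theorem IsSymplectic.mul {M N : Matrix (Fin n ⊕ Fin n) (Fin n ⊕ Fin n) ℂ}
    (hM : IsSymplectic M) (hN : IsSymplectic N) : IsSymplectic (M * N) :=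
  calc (M * N)ᴴ * Jmat n * (M * N) = Nᴴ * (Mᴴ * Jmat n * M) * N := by
        simp only [conjTranspose_mul, Matrix.mul_assoc]
    _ = Jmat n := by rw [hM, hN]

theorem isSymplectic_fromBlocks_one_zero_one {H : Matrix (Fin n) (Fin n) ℂ}
    (hH : H.IsHermitian) : IsSymplectic (fromBlocks 1 0 H 1) := by
  rw [IsSymplectic, Jmat, fromBlocks_conjTranspose, fromBlocks_multiply, fromBlocks_multiply,
    hH.eq]
  simp

theorem fromBlocks_one_zero_one_mul (H A B C D : Matrix (Fin n) (Fin n) ℂ) :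
    fromBlocks 1 0 H 1 * fromBlocks A B C D = fromBlocks A B (H * A + C) (H * B + D) := by
  simp [fromBlocks_multiply]

theorem add_smul_Vmat_eq_fromBlocks_mul (S : ℕ → Matrix (Fin n ⊕ Fin n) (Fin n ⊕ Fin n) ℂ)
    (W : ℕ → Matrix (Fin n) (Fin n) ℂ) (c : ℂ) (k : ℕ) :
    S k + c • Vmat S W k = fromBlocks 1 0 (c • W k) 1 * S k := by
  have hJPsi : Jmat n * PsiMat W k = fromBlocks 0 0 (-W k) 0 := by
    simp [Jmat, PsiMat, fromBlocks_multiply]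
  conv_lhs => rw [← Matrix.one_mul (S k)]
  rw [Vmat, hJPsi, smul_neg, ← Matrix.smul_mul, ← sub_eq_add_neg, ← Matrix.sub_mul,
    ← fromBlocks_one, fromBlocks_smul, sub_eq_add_neg, fromBlocks_neg, fromBlocks_add]
  simp

theorem conjTranspose_fromRows_mul_Jmat_mul_fromRows {m m' : Type*} [Fintype m] [Fintype m']
    (X U : Matrix (Fin n) m ℂ) (X' U' : Matrix (Fin n) m' ℂ) :
    (fromRows X U)ᴴ * Jmat n * fromRows X' U' = Xᴴ * U' - Uᴴ * X' := by
  rw [Matrix.mul_assoc, Jmat, fromBlocks_mul_fromRows,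
    conjTranspose_fromRows_eq_fromCols_conjTranspose, fromCols_mul_fromRows]
  simp [sub_eq_add_neg]

variable {A B C D : Matrix (Fin n) (Fin n) ℂ}

theorem IsSymplectic.lower_blocks (h : IsSymplectic (fromBlocks A B C D)) :
    Dᴴ * A - Bᴴ * C = 1 ∧ Dᴴ * B = Bᴴ * D := by
  rw [IsSymplectic, Jmat, fromBlocks_conjTranspose, fromBlocks_multiply,
    fromBlocks_multiply] at h
  simp only [Matrix.mul_zero, Matrix.mul_one, Matrix.mul_neg, Matrix.neg_mul, zero_add,
    add_zero] at h
  obtain ⟨-, -, h21, h22⟩ := fromBlocks_inj.mp h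
  refine ⟨?_, neg_add_eq_zero.mp h22⟩
  rw [← neg_neg (1 : Matrix _ _ ℂ), ← h21, neg_add, neg_neg, sub_eq_add_neg]

end Symplectic

section Step

variable {n : ℕ} {A B C D X U X' U' : Matrix (Fin n) (Fin n) ℂ}

theorem IsSymplectic.backward_step (hM : IsSymplectic (fromBlocks A B C D))
    (hZ : fromRows X U = fromBlocks A B C D * fromRows X' U') :
    X' = Dᴴ * X - Bᴴ * U := by
  obtain ⟨h1, h2⟩ := hM.lower_blocks
  obtain ⟨rfl, rfl⟩ := fromRows_inj (hZ.trans (fromBlocks_mul_fromRows ..))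
  calc X' = (Dᴴ * A - Bᴴ * C) * X' + (Dᴴ * B - Bᴴ * D) * U' := by
        rw [h1, h2, sub_self]; simp
    _ = Dᴴ * (A * X' + B * U') - Bᴴ * (C * X' + D * U') := by
        simp only [sub_mul, mul_add, Matrix.mul_assoc]; abel

theorem isHermitian_mul_inv (hX : IsUnit X) (hXU : Xᴴ * U = Uᴴ * X) :
    (U * X⁻¹).IsHermitian := by
  let _ := hX.invertible
  rw [IsHermitian, conjTranspose_mul, conjTranspose_nonsing_inv,
    inv_mul_eq_iff_eq_mul_of_invertible, ← Matrix.mul_assoc, hXU,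
    mul_inv_cancel_right_of_invertible]

theorem IsSymplectic.isHermitian_inv_mul_mul_inv (hM : IsSymplectic (fromBlocks A B C D))
    (hZ : fromRows X U = fromBlocks A B C D * fromRows X' U') (hX : IsUnit X)
    (hX' : IsUnit X') (hXU : Xᴴ * U = Uᴴ * X) :
    (X⁻¹ * B * (X'ᴴ)⁻¹).IsHermitian := by
  let _ := hX.invertible
  let _ := hX'.invertible
  have hDB : (Dᴴ * B).IsHermitian := by
    rw [IsHermitian, conjTranspose_mul, conjTranspose_conjTranspose, hM.lower_blocks.2]
  have hP : (X' * X⁻¹ * B).IsHermitian := by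
    have e : X' * X⁻¹ * B = Dᴴ * B - Bᴴ * (U * X⁻¹) * B := by
      rw [hM.backward_step hZ, Matrix.sub_mul, mul_inv_cancel_right_of_invertible]
      simp only [Matrix.sub_mul, Matrix.mul_assoc]
    rw [e]
    exact hDB.sub (isHermitian_conjTranspose_mul_mul B (isHermitian_mul_inv hX hXU))
  have h := isHermitian_conjTranspose_mul_mul (X'ᴴ)⁻¹ hP
  rwa [conjTranspose_nonsing_inv, conjTranspose_conjTranspose, Matrix.mul_assoc X',
    inv_mul_cancel_left_of_invertible] at h

theorem IsSymplectic.lower_right_mul_inv_conjTranspose (hM : IsSymplectic (fromBlocks A B C D))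
    (hZ : fromRows X U = fromBlocks A B C D * fromRows X' U') (hX : IsUnit X)
    (hX' : IsUnit X') (hXU : Xᴴ * U = Uᴴ * X) :
    D * (X'ᴴ)⁻¹ = (Xᴴ)⁻¹ + U * (X⁻¹ * B * (X'ᴴ)⁻¹) := by
  let _ := hX.invertible
  let _ := hX'.invertible
  have hXD : Xᴴ * D = X'ᴴ + Uᴴ * B := by
    rw [hM.backward_step hZ]
    simp
  calc D * (X'ᴴ)⁻¹ = (Xᴴ)⁻¹ * (Xᴴ * D) * (X'ᴴ)⁻¹ := by
        rw [inv_mul_cancel_left_of_invertible]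
    _ = (Xᴴ)⁻¹ + ((Xᴴ)⁻¹ * Uᴴ) * B * (X'ᴴ)⁻¹ := by
        rw [hXD, Matrix.mul_add, Matrix.add_mul, mul_inv_cancel_right_of_invertible]
        simp only [Matrix.mul_assoc]
    _ = (Xᴴ)⁻¹ + U * (X⁻¹ * B * (X'ᴴ)⁻¹) := by
        rw [← conjTranspose_nonsing_inv, ← conjTranspose_mul, (isHermitian_mul_inv hX hXU).eq]
        simp only [Matrix.mul_assoc]

theorem IsSymplectic.fromRows_mul_add_inv_conjTranspose (hM : IsSymplectic (fromBlocks A B C D))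
    (hZ : fromRows X U = fromBlocks A B C D * fromRows X' U') (hX : IsUnit X)
    (hX' : IsUnit X') (hXU : Xᴴ * U = Uᴴ * X) {L L' : Matrix (Fin n) (Fin n) ℂ}
    (hL : L = L' + X⁻¹ * B * (X'ᴴ)⁻¹) :
    fromRows (X * L) (U * L + (Xᴴ)⁻¹) =
      fromBlocks A B C D * fromRows (X' * L') (U' * L' + (X'ᴴ)⁻¹) := by
  let _ := hX.invertible
  have hD := hM.lower_right_mul_inv_conjTranspose hZ hX hX' hXU
  obtain ⟨hXstep, hUstep⟩ := fromRows_inj (hZ.trans (fromBlocks_mul_fromRows ..))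
  rw [fromBlocks_mul_fromRows, hL]
  congr 1
  · calc X * (L' + X⁻¹ * B * (X'ᴴ)⁻¹) = X * L' + B * (X'ᴴ)⁻¹ := by
          rw [Matrix.mul_add, Matrix.mul_assoc X⁻¹, mul_inv_cancel_left_of_invertible]
      _ = A * (X' * L') + B * (U' * L' + (X'ᴴ)⁻¹) := by
          rw [hXstep]; simp only [Matrix.add_mul, Matrix.mul_add, Matrix.mul_assoc]; abel
  · calc U * (L' + X⁻¹ * B * (X'ᴴ)⁻¹) + (Xᴴ)⁻¹ = U * L' + D * (X'ᴴ)⁻¹ := by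
          rw [hD, Matrix.mul_add]; abel
      _ = C * (X' * L') + D * (U' * L' + (X'ᴴ)⁻¹) := by
          rw [hUstep]; simp only [Matrix.add_mul, Matrix.mul_add, Matrix.mul_assoc]; abel

end Step

theorem conjTranspose_fromRows_mul_Jmat_mul_fromRows_mul_add_inv_conjTranspose {n : ℕ}
    {X U : Matrix (Fin n) (Fin n) ℂ} (hX : IsUnit X) (hXU : Xᴴ * U = Uᴴ * X)
    (L : Matrix (Fin n) (Fin n) ℂ) :
    (fromRows X U)ᴴ * Jmat n * fromRows (X * L) (U * L + (Xᴴ)⁻¹) = 1 := by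
  let _ := hX.invertible
  rw [conjTranspose_fromRows_mul_Jmat_mul_fromRows, Matrix.mul_add, mul_inv_of_invertible,
    ← Matrix.mul_assoc, ← Matrix.mul_assoc, hXU, add_sub_cancel_left]

section Lam

variable {n : ℕ} {B Xt : ℕ → Matrix (Fin n) (Fin n) ℂ}

theorem LamMat_eq_LamMat_succ_add (k : ℕ) :
    LamMat B Xt k = LamMat B Xt (k + 1) + (Xt k)⁻¹ * B k * ((Xt (k + 1))ᴴ)⁻¹ := by
  rw [LamMat, LamMat, Finset.sum_range_succ, neg_add_cancel_right]

theorem isHermitian_LamMat (h : ∀ k, ((Xt k)⁻¹ * B k * ((Xt (k + 1))ᴴ)⁻¹).IsHermitian) (k : ℕ) :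
    (LamMat B Xt k).IsHermitian :=
  (isSelfAdjoint_sum _ fun j _ => (h j).neg.isSelfAdjoint).isHermitian

end Lam

theorem statement17_general {n : ℕ}
    (S : ℕ → Matrix (Fin n ⊕ Fin n) (Fin n ⊕ Fin n) ℂ)
    (A B C D W : ℕ → Matrix (Fin n) (Fin n) ℂ)
    (hS : ∀ k, (S k)ᴴ * Jmat n * S k = Jmat n)
    (hblocks : ∀ k, S k = Matrix.fromBlocks (A k) (B k) (C k) (D k))
    (hW : ∀ k, (W k).PosDef)
    (lam : ℝ) (Xt Ut : ℕ → Matrix (Fin n) (Fin n) ℂ)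
    (hcb : IsConjoinedBasis S W lam (fun k => Matrix.fromRows (Xt k) (Ut k)))
    (hXinv : ∀ k, IsUnit (Xt k)) :
    (∀ k, ((Xt k)⁻¹ * B k * ((Xt (k + 1))ᴴ)⁻¹).IsHermitian) ∧
      (∀ k, (LamMat B Xt k).IsHermitian) ∧
      (∀ k, Matrix.fromRows (Xhat B Xt k) (Uhat B Xt Ut k) =
        (S k + (lam : ℂ) • Vmat S W k) *
          Matrix.fromRows (Xhat B Xt (k + 1)) (Uhat B Xt Ut (k + 1))) ∧
      (∀ k, (Matrix.fromRows (Xt k) (Ut k))ᴴ * Jmat n *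
          Matrix.fromRows (Xhat B Xt k) (Uhat B Xt Ut k) = 1) ∧
      (∀ k, IsUnit (LamMat B Xt k) →
        IsUnit (Xhat B Xt k) ∧ (Xhat B Xt k)⁻¹ * Xt k = (LamMat B Xt k)⁻¹ ∧
          ((LamMat B Xt k)⁻¹).IsHermitian) := by
  obtain ⟨hsol, hcb⟩ := hcb
  have hshear : ∀ k, ((lam : ℂ) • W k).IsHermitian := fun k =>
    (hW k).isHermitian.smul (Complex.conj_ofReal lam)
  have hM : ∀ k, S k + (lam : ℂ) • Vmat S W k = fromBlocks (A k) (B k)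
      ((lam : ℂ) • W k * A k + C k) ((lam : ℂ) • W k * B k + D k) := fun k => by
    rw [add_smul_Vmat_eq_fromBlocks_mul, hblocks, fromBlocks_one_zero_one_mul]
  have hMsymp : ∀ k, IsSymplectic (fromBlocks (A k) (B k)
      ((lam : ℂ) • W k * A k + C k) ((lam : ℂ) • W k * B k + D k)) := fun k => by
    rw [← hM k, add_smul_Vmat_eq_fromBlocks_mul]
    exact (isSymplectic_fromBlocks_one_zero_one (hshear k)).mul (hS k)
  have hstep : ∀ k, fromRows (Xt k) (Ut k) = fromBlocks (A k) (B k)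
      ((lam : ℂ) • W k * A k + C k) ((lam : ℂ) • W k * B k + D k) *
        fromRows (Xt (k + 1)) (Ut (k + 1)) := fun k => by
    rw [← hM k]; exact hsol k
  have hXU : ∀ k, (Xt k)ᴴ * Ut k = (Ut k)ᴴ * Xt k := fun k => sub_eq_zero.mp <| by
    rw [← conjTranspose_fromRows_mul_Jmat_mul_fromRows]; exact (hcb k).2
  have hG : ∀ k, ((Xt k)⁻¹ * B k * ((Xt (k + 1))ᴴ)⁻¹).IsHermitian := fun k =>
    (hMsymp k).isHermitian_inv_mul_mul_inv (hstep k) (hXinv k) (hXinv (k + 1)) (hXU k)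
  refine ⟨hG, isHermitian_LamMat hG, fun k => ?_, fun k => ?_, fun k hL => ?_⟩
  · rw [hM k]
    exact (hMsymp k).fromRows_mul_add_inv_conjTranspose (hstep k) (hXinv k)
      (hXinv (k + 1)) (hXU k) (LamMat_eq_LamMat_succ_add k)
  · exact conjTranspose_fromRows_mul_Jmat_mul_fromRows_mul_add_inv_conjTranspose (hXinv k)
      (hXU k) _
  · let _ := (hXinv k).invertible
    refine ⟨(hXinv k).mul hL, ?_, (isHermitian_LamMat hG k).inv⟩
    rw [Xhat, Matrix.mul_inv_rev, Matrix.mul_assoc, inv_mul_of_invertible, Matrix.mul_one]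

/-- Associated dominant solution: for a conjoined basis `Z̃ = (X̃; Ũ)` of
`(S_λ)` with all `X̃ₖ` invertible, setting `Λₖ, X̂ₖ, Ûₖ` as above: (i) each
`X̃ₖ⁻¹ ℬₖ (X̃_{k+1}*)⁻¹` is Hermitian, hence each `Λₖ` is Hermitian; (ii) `Ẑ = (X̂; Û)`
solves `(S_λ)`; (iii) `Z̃ₖ* 𝒥 Ẑₖ = Iₙ` for all `k`; (iv) whenever `Λₖ` is invertible, `X̂ₖ`
is invertible and `X̂ₖ⁻¹ X̃ₖ = Λₖ⁻¹` is Hermitian. -/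
theorem statement17 {n : ℕ} (hn : 1 ≤ n)
    (S : ℕ → Matrix (Fin n ⊕ Fin n) (Fin n ⊕ Fin n) ℂ)
    (A B C D W : ℕ → Matrix (Fin n) (Fin n) ℂ)
    (hS : ∀ k, (S k)ᴴ * Jmat n * S k = Jmat n)
    (hblocks : ∀ k, S k = Matrix.fromBlocks (A k) (B k) (C k) (D k))
    (hW : ∀ k, (W k).PosDef)
    (lam : ℝ) (Xt Ut : ℕ → Matrix (Fin n) (Fin n) ℂ)
    (hcb : IsConjoinedBasis S W lam (fun k => Matrix.fromRows (Xt k) (Ut k)))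
    (hXinv : ∀ k, IsUnit (Xt k)) :
    (∀ k, ((Xt k)⁻¹ * B k * ((Xt (k + 1))ᴴ)⁻¹).IsHermitian) ∧
      (∀ k, (LamMat B Xt k).IsHermitian) ∧
      (∀ k, Matrix.fromRows (Xhat B Xt k) (Uhat B Xt Ut k) =
        (S k + (lam : ℂ) • Vmat S W k) *
          Matrix.fromRows (Xhat B Xt (k + 1)) (Uhat B Xt Ut (k + 1))) ∧
      (∀ k, (Matrix.fromRows (Xt k) (Ut k))ᴴ * Jmat n *
          Matrix.fromRows (Xhat B Xt k) (Uhat B Xt Ut k) = 1) ∧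
      (∀ k, IsUnit (LamMat B Xt k) →
        IsUnit (Xhat B Xt k) ∧ (Xhat B Xt k)⁻¹ * Xt k = (LamMat B Xt k)⁻¹ ∧
          ((LamMat B Xt k)⁻¹).IsHermitian) :=
  statement17_general S A B C D W hS hblocks hW lam Xt Ut hcb hXinv
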